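/- arXiv:2401.13944 — 2 statements merged into one kernel-verified Lean document; each statement's English description precedes it below -/
import Mathlib

section
/- If f: R^n → R is convex and L-Lipschitz continuous, then its Gaussian smoothing f_μ(x) = E_u[f(x + μu)] with u ~ N(0, I_n) satisfies f(x) ≤ f_μ(x) ≤ f(x) + μL√n for every x and every μ > 0. -/
/-!
Since `u` is centred, Jensen's inequality gives `f x = f (E[x + μ u]) ≤ E[f (x + μ u)]`. For the
upper bound, integrate `f (x + μ u) ≤ f x + μ L ‖u‖` and use `E‖u‖ ≤ √(E‖u‖²) = √n`, where
`E‖u‖² = n` because the covariance of the standard Gaussian is the inner product.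
-/

open MeasureTheory ProbabilityTheory Real Matrix

noncomputable def stdGaussian (d : ℕ) : Measure (EuclideanSpace ℝ (Fin d)) :=
  (Measure.pi fun _ : Fin d => gaussianReal 0 1).map (MeasurableEquiv.toLp 2 (Fin d → ℝ))

open Module
open scoped RealInnerProductSpace

section Smoothing

variable {E : Type*} [NormedAddCommGroup E] {f : E → ℝ}

lemma nonneg_of_abs_sub_le_mul_norm [Nontrivial E] {L : ℝ}
    (hf : ∀ x y, |f x - f y| ≤ L * ‖x - y‖) : 0 ≤ L := by
  obtain ⟨v, hv⟩ := exists_ne (0 : E)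
  have h := (abs_nonneg _).trans (hf v 0)
  rw [sub_zero] at h
  exact nonneg_of_mul_nonneg_left h (norm_pos_iff.mpr hv)

lemma LipschitzWith.of_abs_sub_le_mul_norm {L : ℝ} (hf : ∀ x y, |f x - f y| ≤ L * ‖x - y‖) :
    LipschitzWith L.toNNReal f :=
  .of_dist_le' fun x y ↦ by simpa [Real.dist_eq, dist_eq_norm] using hf x y

variable [NormedSpace ℝ E] [MeasurableSpace E] {ν : Measure E} [IsProbabilityMeasure ν]
  (x : E) (c : ℝ)

lemma LipschitzWith.integrable_comp_add_smul [OpensMeasurableSpace E] {K : NNReal}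
    (hf : LipschitzWith K f) (hν : Integrable (‖·‖) ν) :
    Integrable (fun u ↦ f (x + c • u)) ν := by
  refine Integrable.mono' (g := fun u ↦ |f x| + K * (|c| * ‖u‖))
    ((integrable_const _).add ((hν.const_mul _).const_mul _))
    (hf.continuous.comp (by fun_prop)).aestronglyMeasurable (.of_forall fun u ↦ ?_)
  have hdist := hf.dist_le_mul (x + c • u) x
  rw [Real.dist_eq, dist_eq_norm, add_sub_cancel_left, norm_smul, Real.norm_eq_abs] at hdist
  rw [Real.norm_eq_abs]
  linarith [abs_sub_abs_le_abs_sub (f (x + c • u)) (f x)]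

lemma integral_comp_add_smul_le {L : ℝ} (hf : ∀ y, f y - f x ≤ L * ‖y - x‖) (hc : 0 ≤ c)
    (hint : Integrable (fun u ↦ f (x + c • u)) ν) (hν : Integrable (‖·‖) ν) :
    ∫ u, f (x + c • u) ∂ν ≤ f x + c * L * ∫ u, ‖u‖ ∂ν := by
  have hbound : ∀ u, f (x + c • u) ≤ f x + c * L * ‖u‖ := fun u ↦ by
    have := hf (x + c • u)
    rw [add_sub_cancel_left, norm_smul, Real.norm_of_nonneg hc] at this
    linarith
  calc ∫ u, f (x + c • u) ∂ν ≤ ∫ u, f x + c * L * ‖u‖ ∂ν :=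
        integral_mono hint ((integrable_const _).add (hν.const_mul _)) hbound
    _ = f x + c * L * ∫ u, ‖u‖ ∂ν := by
        rw [integral_add (integrable_const _) (hν.const_mul _), integral_const_mul]
        simp

variable [CompleteSpace E]

lemma ConvexOn.le_integral_comp_add_smul (hf : ConvexOn ℝ Set.univ f) (hcont : Continuous f)
    (hν : Integrable id ν) (hmean : ∫ u, u ∂ν = 0) (hint : Integrable (fun u ↦ f (x + c • u)) ν) :
    f x ≤ ∫ u, f (x + c • u) ∂ν := by
  have hsmul : Integrable (fun u ↦ c • u) ν := hν.smul c
  have hmean' : ∫ u, x + c • u ∂ν = x := by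
    rw [integral_add (integrable_const x) hsmul, integral_smul, hmean]
    simp
  simpa only [hmean'] using hf.map_integral_le (f := fun u ↦ x + c • u) hcont.continuousOn
    isClosed_univ (.of_forall fun _ ↦ Set.mem_univ _) ((integrable_const x).add hsmul) hint

end Smoothing

section StdGaussian

variable {E : Type*} [NormedAddCommGroup E] [InnerProductSpace ℝ E] [FiniteDimensional ℝ E]
  [MeasurableSpace E] [BorelSpace E]

lemma integral_inner_sq_stdGaussian (v : E) : ∫ u, ⟪v, u⟫ ^ 2 ∂stdGaussian E = ‖v‖ ^ 2 := by
  have h := covarianceBilin_apply (IsGaussian.memLp_two_id (μ := stdGaussian E)) v v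
  rw [covarianceBilin_stdGaussian, innerSL_apply_apply ℝ] at h
  simpa [integral_id_stdGaussian, ← sq, real_inner_self_eq_norm_sq] using h.symm

lemma integral_norm_sq_stdGaussian : ∫ u, ‖u‖ ^ 2 ∂stdGaussian E = finrank ℝ E := by
  let b := stdOrthonormalBasis ℝ E
  simp_rw [← b.sum_sq_inner_right]
  have hint (i) : Integrable (fun u ↦ ⟪b i, u⟫ ^ 2) (stdGaussian E) :=
    (IsGaussian.memLp_two_id.const_inner (b i)).integrable_sq
  rw [integral_finsetSum _ fun i _ ↦ hint i]
  simp [integral_inner_sq_stdGaussian, b.orthonormal.1]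

lemma integral_norm_stdGaussian_le : ∫ u, ‖u‖ ∂stdGaussian E ≤ √(finrank ℝ E) := by
  have hvar := variance_eq_sub (IsGaussian.memLp_two_id (μ := stdGaussian E)).norm
  rw [← integral_norm_sq_stdGaussian]
  refine Real.le_sqrt_of_sq_le ?_
  have := variance_nonneg (fun u ↦ ‖u‖) (stdGaussian E)
  simp only [Pi.pow_apply, id_eq] at hvar
  linarith

lemma integral_comp_add_smul_stdGaussian_le {f : E → ℝ} {L c : ℝ}
    (hf : ∀ x y, |f x - f y| ≤ L * ‖x - y‖) (hc : 0 ≤ c) (x : E) :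
    ∫ u, f (x + c • u) ∂stdGaussian E ≤ f x + c * L * √(finrank ℝ E) := by
  rcases subsingleton_or_nontrivial E with hE | hE
  · have : ∀ u : E, u = 0 := fun u ↦ Subsingleton.elim u 0
    simp [this, finrank_zero_of_subsingleton]
  have hlip := LipschitzWith.of_abs_sub_le_mul_norm hf
  have hnorm : Integrable (‖·‖) (stdGaussian E) := IsGaussian.integrable_id.norm
  calc ∫ u, f (x + c • u) ∂stdGaussian E ≤ f x + c * L * ∫ u, ‖u‖ ∂stdGaussian E :=
        integral_comp_add_smul_le x c (fun y ↦ (le_abs_self _).trans (hf y x)) hc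
          (hlip.integrable_comp_add_smul x c hnorm) hnorm
    _ ≤ f x + c * L * √(finrank ℝ E) := by
        gcongr
        · exact mul_nonneg hc (nonneg_of_abs_sub_le_mul_norm hf)
        · exact integral_norm_stdGaussian_le

end StdGaussian

lemma stdGaussian_eq_stdGaussian_euclideanSpace (n : ℕ) :
    _root_.stdGaussian n = ProbabilityTheory.stdGaussian (EuclideanSpace ℝ (Fin n)) :=
  map_pi_eq_stdGaussian

theorem gaussian_smoothing_bounds (n : ℕ) (f : EuclideanSpace ℝ (Fin n) → ℝ) (L : ℝ)
    (hconv : ConvexOn ℝ Set.univ f)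
    (hlip : ∀ x y, |f x - f y| ≤ L * ‖x - y‖)
    (x : EuclideanSpace ℝ (Fin n)) (μ : ℝ) (hμ : 0 < μ) :
    f x ≤ (∫ u, f (x + μ • u) ∂ stdGaussian n) ∧
    (∫ u, f (x + μ • u) ∂ stdGaussian n) ≤ f x + μ * L * Real.sqrt n := by
  have hf := LipschitzWith.of_abs_sub_le_mul_norm hlip
  rw [stdGaussian_eq_stdGaussian_euclideanSpace]
  refine ⟨hconv.le_integral_comp_add_smul x μ hf.continuous IsGaussian.integrable_id
    integral_id_stdGaussian (hf.integrable_comp_add_smul x μ IsGaussian.integrable_id.norm), ?_⟩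
  simpa only [finrank_euclideanSpace_fin] using
    integral_comp_add_smul_stdGaussian_le hlip hμ.le x
end

section
/- Let P ∈ R^{n×d} with d ≤ n be a random matrix with i.i.d. standard Gaussian entries. Then for any fixed x ∈ R^n, E[||P P^T x||^2] ≤ 2(n+4)(d+4)||x||^2. -/
open MeasureTheory ProbabilityTheory Real Matrix

noncomputable def gaussMatrix (n d : ℕ) : Measure (Fin n → Fin d → ℝ) :=
  Measure.pi fun _ : Fin n => Measure.pi fun _ : Fin d => gaussianReal 0 1

/-!
Expanding the square, `E ‖P Pᵀ x‖² = ∑ x_j x_j' E[P_ik P_jk P_ik' P_j'k']` (sum over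
`i, j, j', k, k'`). The entries form a standard Gaussian vector indexed by `Fin n × Fin d`, so
Isserlis' theorem evaluates each fourth moment as a sum of three products of Kronecker deltas; the
one-dimensional moments `1, 0, 1, 0, 3` it needs come from Gaussian integration by parts,
`E[X^(k+2)] = (k+1) E[X^k]`. Summing the deltas gives exactly `E ‖P Pᵀ x‖² = d (n + d + 1) ‖x‖²`,
and `d (n + d + 1) ≤ 2 (n + 4) (d + 4)` as soon as `d ≤ n`.
-/

lemma integrable_pow_gaussianReal (k : ℕ) : Integrable (fun x : ℝ ↦ x ^ k) (gaussianReal 0 1) :=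
  integrable_pow_of_mem_interior_integrableExpSet (by simp) k

lemma integrable_gaussianPDFReal_mul_pow (k : ℕ) :
    Integrable (fun x ↦ gaussianPDFReal 0 1 x * x ^ k) := by
  have h := integrable_pow_gaussianReal k
  rw [gaussianReal_of_var_ne_zero 0 one_ne_zero,
    integrable_withDensity_iff_integrable_smul' (measurable_gaussianPDF 0 1)
      (ae_of_all _ fun _ ↦ gaussianPDF_lt_top)] at h
  simpa only [toReal_gaussianPDF, smul_eq_mul] using h

lemma hasDerivAt_gaussianPDFReal_zero_one (x : ℝ) :
    HasDerivAt (gaussianPDFReal 0 1) (-(x * gaussianPDFReal 0 1 x)) x := by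
  have h := ((hasDerivAt_pow 2 x).fun_neg.div_const 2).exp.const_mul (√(2 * π))⁻¹
  simp only [gaussianPDFReal_def, NNReal.coe_one, mul_one, sub_zero]
  exact h.congr_deriv (by push_cast; ring)

lemma integral_pow_add_two_gaussianReal (k : ℕ) :
    ∫ x, x ^ (k + 2) ∂gaussianReal 0 1 = (k + 1) * ∫ x, x ^ k ∂gaussianReal 0 1 := by
  simp only [integral_gaussianReal_eq_integral_smul one_ne_zero, smul_eq_mul]
  have h := integral_mul_deriv_eq_deriv_mul_of_integrable
    (u := fun x ↦ x ^ (k + 1)) (u' := fun x ↦ (k + 1 : ℝ) * x ^ k)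
    (v := gaussianPDFReal 0 1) (v' := fun x ↦ -(x * gaussianPDFReal 0 1 x))
    (fun x _ ↦ by simpa using hasDerivAt_pow (k + 1) x)
    (fun x _ ↦ hasDerivAt_gaussianPDFReal_zero_one x)
    (by simpa [Pi.mul_def, pow_succ, mul_comm, mul_assoc, mul_left_comm] using
      (integrable_gaussianPDFReal_mul_pow (k + 2)).neg)
    (by simpa [Pi.mul_def, mul_comm, mul_assoc, mul_left_comm] using
      (integrable_gaussianPDFReal_mul_pow k).const_mul (k + 1 : ℝ))
    (by simpa [Pi.mul_def, mul_comm] using integrable_gaussianPDFReal_mul_pow (k + 1))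
  rw [← integral_const_mul, ← neg_inj]
  convert h using 1
  · rw [← integral_neg]
    congr 1 with x
    ring
  · congr 2 with x
    ring

lemma integral_sq_gaussianReal : ∫ x, x ^ 2 ∂gaussianReal 0 1 = 1 := by
  simpa using integral_pow_add_two_gaussianReal 0

lemma integral_pow_three_gaussianReal : ∫ x, x ^ 3 ∂gaussianReal 0 1 = 0 := by
  simpa using integral_pow_add_two_gaussianReal 1

lemma integral_pow_four_gaussianReal : ∫ x, x ^ 4 ∂gaussianReal 0 1 = 3 := by
  rw [integral_pow_add_two_gaussianReal 2, integral_sq_gaussianReal]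
  norm_num

section Isserlis

variable {ι : Type*} [Fintype ι] [DecidableEq ι]

lemma prod_map_eq_prod_pow_count {M : Type*} [CommMonoid M] (f : ι → M) (s : Multiset ι) :
    (s.map f).prod = ∏ p, f p ^ s.count p := by
  rw [Finset.prod_multiset_map_count]
  exact Finset.prod_subset (Finset.subset_univ _) fun p _ hp ↦ by
    rw [Multiset.count_eq_zero_of_notMem (by simpa using hp), pow_zero]

lemma integrable_prod_map_pi_gaussianReal (s : Multiset ι) :
    Integrable (fun ω : ι → ℝ ↦ (s.map ω).prod) (Measure.pi fun _ ↦ gaussianReal 0 1) := by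
  simp_rw [prod_map_eq_prod_pow_count]
  exact Integrable.fintype_prod fun p ↦ integrable_pow_gaussianReal _

lemma integrable_mul_mul_mul_pi_gaussianReal (q₁ q₂ q₃ q₄ : ι) :
    Integrable (fun ω : ι → ℝ ↦ ω q₁ * ω q₂ * ω q₃ * ω q₄)
      (Measure.pi fun _ ↦ gaussianReal 0 1) := by
  simpa [mul_assoc] using integrable_prod_map_pi_gaussianReal {q₁, q₂, q₃, q₄}

lemma integral_prod_map_pi_gaussianReal (s : Multiset ι) :
    ∫ ω, (s.map ω).prod ∂Measure.pi (fun _ : ι ↦ gaussianReal 0 1) =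
      ∏ p ∈ s.toFinset, ∫ x, x ^ s.count p ∂gaussianReal 0 1 := by
  simp_rw [prod_map_eq_prod_pow_count]
  rw [integral_fintype_prod_eq_prod (fun p x ↦ x ^ s.count p)]
  refine (Finset.prod_subset (Finset.subset_univ _) fun p _ hp ↦ ?_).symm
  rw [Multiset.count_eq_zero_of_notMem (by simpa using hp)]
  simp

theorem integral_mul_mul_mul_pi_gaussianReal (q₁ q₂ q₃ q₄ : ι) :
    ∫ ω, ω q₁ * ω q₂ * ω q₃ * ω q₄ ∂Measure.pi (fun _ : ι ↦ gaussianReal 0 1) =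
      (if q₁ = q₂ then 1 else 0) * (if q₃ = q₄ then 1 else 0) +
      (if q₁ = q₃ then 1 else 0) * (if q₂ = q₄ then 1 else 0) +
      (if q₁ = q₄ then 1 else 0) * (if q₂ = q₃ then 1 else 0) := by
  have h := integral_prod_map_pi_gaussianReal {q₁, q₂, q₃, q₄}
  simp only [Multiset.insert_eq_cons, Multiset.map_cons, Multiset.map_singleton,
    Multiset.prod_cons, Multiset.prod_singleton, ← mul_assoc] at h
  rw [h]
  clear h
  -- The product runs over the distinct indices, each contributing the moment of its multiplicity:
  -- an index of odd multiplicity gives `0`, two distinct pairs give `1 * 1`, one quadruple gives `3`.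
  by_cases h12 : q₁ = q₂ <;> by_cases h13 : q₁ = q₃ <;> by_cases h14 : q₁ = q₄ <;>
    by_cases h23 : q₂ = q₃ <;> by_cases h24 : q₂ = q₄ <;> by_cases h34 : q₃ = q₄ <;>
    simp_all [Finset.prod_insert, Multiset.count_cons, Multiset.count_singleton, eq_comm,
      integral_sq_gaussianReal, integral_pow_three_gaussianReal, integral_pow_four_gaussianReal,
      one_add_one_eq_two, two_add_one_eq_three]

end Isserlis

lemma measurePreserving_curry_gaussMatrix (n d : ℕ) :
    MeasurePreserving (MeasurableEquiv.curry (Fin n) (Fin d) ℝ)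
      (Measure.pi fun _ ↦ gaussianReal 0 1) (gaussMatrix n d) := by
  refine MeasurePreserving.symm _ ⟨(MeasurableEquiv.curry _ _ ℝ).symm.measurable, ?_⟩
  refine (Measure.pi_eq fun s _ ↦ ?_).symm
  have hbox : (MeasurableEquiv.curry (Fin n) (Fin d) ℝ).symm ⁻¹' Set.univ.pi s =
      Set.univ.pi fun i ↦ Set.univ.pi fun j ↦ s (i, j) := by
    ext P
    simp [MeasurableEquiv.coe_curry_symm, Prod.forall]
  rw [MeasurableEquiv.map_apply, hbox, gaussMatrix, Measure.pi_pi, Fintype.prod_prod_type]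
  simp only [Measure.pi_pi]

lemma integrable_sq_finsetSum {Ω α : Type*} [MeasurableSpace Ω] {μ : Measure Ω}
    (s : Finset α) (f : α → Ω → ℝ) (hf : ∀ a b, Integrable (fun ω ↦ f a ω * f b ω) μ) :
    Integrable (fun ω ↦ (∑ a ∈ s, f a ω) ^ 2) μ := by
  simp_rw [sq, Finset.sum_mul_sum]
  exact integrable_finsetSum _ fun a _ ↦ integrable_finsetSum _ fun b _ ↦ hf a b

lemma integral_sq_finsetSum {Ω α : Type*} [MeasurableSpace Ω] {μ : Measure Ω}
    (s : Finset α) (f : α → Ω → ℝ) (hf : ∀ a b, Integrable (fun ω ↦ f a ω * f b ω) μ) :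
    ∫ ω, (∑ a ∈ s, f a ω) ^ 2 ∂μ = ∑ a ∈ s, ∑ b ∈ s, ∫ ω, f a ω * f b ω ∂μ := by
  simp_rw [sq, Finset.sum_mul_sum]
  rw [integral_finsetSum _ fun a _ ↦ integrable_finsetSum _ fun b _ ↦ hf a b]
  exact Finset.sum_congr rfl fun a _ ↦ integral_finsetSum _ fun b _ ↦ hf a b

lemma mul_transpose_mulVec_curry {n d : ℕ} (ω : Fin n × Fin d → ℝ) (x : Fin n → ℝ) (i : Fin n) :
    ((of (Function.curry ω) * (of (Function.curry ω))ᵀ) *ᵥ x) i =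
      ∑ q : Fin n × Fin d, x q.1 * (ω (i, q.2) * ω q) := by
  simp only [mulVec, dotProduct, mul_apply, transpose_apply, of_apply, Function.curry_apply,
    Fintype.sum_prod_type, Finset.sum_mul]
  exact Finset.sum_congr rfl fun _ _ ↦ Finset.sum_congr rfl fun _ _ ↦ by ring

lemma sum_mul_isserlis_deltas (n d : ℕ) (x : Fin n → ℝ) :
    ∑ i : Fin n, ∑ q : Fin n × Fin d, ∑ q' : Fin n × Fin d, x q.1 * x q'.1 *
      ((if (i, q.2) = q then 1 else 0) * (if (i, q'.2) = q' then 1 else 0) +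
        (if (i, q.2) = (i, q'.2) then 1 else 0) * (if q = q' then 1 else 0) +
        (if (i, q.2) = q' then 1 else 0) * (if q = (i, q'.2) then 1 else 0)) =
      d * (n + d + 1) * ∑ i, x i ^ 2 := by
  simp only [Prod.ext_iff, and_true, mul_ite, mul_one, mul_zero, true_and, ite_and, mul_add,
    Finset.sum_add_distrib, Fintype.sum_prod_type, Finset.sum_ite_irrel, Finset.sum_const,
    Finset.card_univ, Fintype.card_fin, nsmul_eq_mul, Finset.sum_ite_eq,
    Finset.mem_univ, ↓reduceIte, Finset.sum_ite_eq', Finset.mul_sum]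
  rw [← Finset.sum_add_distrib, ← Finset.sum_add_distrib]
  exact Finset.sum_congr rfl fun i _ ↦ by ring

theorem integral_sum_sq_mul_transpose_mulVec_gaussMatrix (n d : ℕ) (x : Fin n → ℝ) :
    ∫ P, ∑ i, ((of P * (of P)ᵀ) *ᵥ x) i ^ 2 ∂gaussMatrix n d =
      d * (n + d + 1) * ∑ i, x i ^ 2 := by
  rw [← (measurePreserving_curry_gaussMatrix n d).integral_comp']
  simp only [MeasurableEquiv.coe_curry, mul_transpose_mulVec_curry]
  have hfactor : ∀ i (q q' : Fin n × Fin d) (ω : Fin n × Fin d → ℝ),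
      x q.1 * (ω (i, q.2) * ω q) * (x q'.1 * (ω (i, q'.2) * ω q')) =
        x q.1 * x q'.1 * (ω (i, q.2) * ω q * ω (i, q'.2) * ω q') := fun _ _ _ _ ↦ by ring
  have hint : ∀ i (q q' : Fin n × Fin d), Integrable (fun ω : Fin n × Fin d → ℝ ↦
      x q.1 * (ω (i, q.2) * ω q) * (x q'.1 * (ω (i, q'.2) * ω q')))
      (Measure.pi fun _ ↦ gaussianReal 0 1) := fun i q q' ↦ by
    simpa only [hfactor] using
      (integrable_mul_mul_mul_pi_gaussianReal (i, q.2) q (i, q'.2) q').const_mul (x q.1 * x q'.1)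
  rw [integral_finsetSum _ fun i _ ↦ integrable_sq_finsetSum _ _ (hint i)]
  simp_rw [integral_sq_finsetSum _ _ (hint _), hfactor, integral_const_mul,
    integral_mul_mul_mul_pi_gaussianReal]
  exact sum_mul_isserlis_deltas n d x

theorem gaussian_PPt_bound (n d : ℕ) (hdn : d ≤ n) (x : Fin n → ℝ) :
    (∫ P, ∑ i, (((Matrix.of P) * (Matrix.of P)ᵀ).mulVec x i) ^ 2 ∂ gaussMatrix n d)
      ≤ 2 * ((n : ℝ) + 4) * ((d : ℝ) + 4) * ∑ i, (x i) ^ 2 := by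
  rw [integral_sum_sq_mul_transpose_mulVec_gaussMatrix]
  have hdn' : (d : ℝ) ≤ n := by exact_mod_cast hdn
  have hcoef : (d : ℝ) * (n + d + 1) ≤ 2 * (n + 4) * (d + 4) := by
    nlinarith [(n.cast_nonneg : (0 : ℝ) ≤ n)]
  exact mul_le_mul_of_nonneg_right hcoef (Finset.sum_nonneg fun i _ ↦ sq_nonneg (x i))
end
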